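/- The map Δ₁ → ℝ² sending (r,s,t) to (det G(r,s,t), √(per G(r,s,t))) is injective; consequently, since Δ₁ is compact and the map is continuous, it is a homeomorphism from Δ₁ onto its image S ⊂ ℝ². -/

import Mathlib

/-- The doubly stochastic Gram matrix `G(r,s,t)`. -/
def G (r s t : ℝ) : Matrix (Fin 4) (Fin 4) ℝ :=
  !![0, r, s, t; r, 0, t, s; s, t, 0, r; t, s, r, 0]

/-- The permanent of a `4 × 4` real matrix. -/
noncomputable def per (A : Matrix (Fin 4) (Fin 4) ℝ) : ℝ :=
  ∑ σ : Equiv.Perm (Fin 4), ∏ i, A i (σ i)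

/-- The triangle `Δ₁`: ordered triples in `Δ`. -/
def Δ₁ : Set (ℝ × ℝ × ℝ) :=
  {p | p.1 + p.2.1 + p.2.2 = 1 ∧ p.1 ≤ p.2.1 + p.2.2 ∧ p.2.1 ≤ p.2.2 + p.1 ∧
    p.2.2 ≤ p.1 + p.2.1 ∧ p.1 ≤ p.2.1 ∧ p.2.1 ≤ p.2.2}

/-- The map `(r,s,t) ↦ (det G(r,s,t), √(per G(r,s,t)))`. -/
noncomputable def F (p : ℝ × ℝ × ℝ) : ℝ × ℝ :=
  ((G p.1 p.2.1 p.2.2).det, Real.sqrt (per (G p.1 p.2.1 p.2.2)))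

lemma det_G (r s t : ℝ) : (G r s t).det =
    r^4+s^4+t^4-2*r^2*s^2-2*r^2*t^2-2*s^2*t^2 := by
  simp [G, Matrix.det_succ_row_zero, Fin.sum_univ_succ, Matrix.det_fin_three,
    Fin.succAbove, Fin.castSucc, Fin.castAdd, Fin.castLE]
  ring

lemma d2_4 (e : Equiv.Perm (Fin 3)) (p : Fin 4) :
    Equiv.Perm.decomposeFin.symm (p, e) 2 = Equiv.swap 0 p (e 1).succ := by
  rw [show (2:Fin 4) = Fin.succ 1 by rfl]
  exact Equiv.Perm.decomposeFin_symm_apply_succ e p 1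

lemma d3_4 (e : Equiv.Perm (Fin 3)) (p : Fin 4) :
    Equiv.Perm.decomposeFin.symm (p, e) 3 = Equiv.swap 0 p (e 2).succ := by
  rw [show (3:Fin 4) = Fin.succ 2 by rfl]
  exact Equiv.Perm.decomposeFin_symm_apply_succ e p 2

lemma d2_3 (e : Equiv.Perm (Fin 2)) (p : Fin 3) :
    Equiv.Perm.decomposeFin.symm (p, e) 2 = Equiv.swap 0 p (e 1).succ := by
  rw [show (2:Fin 3) = Fin.succ 1 by rfl]
  exact Equiv.Perm.decomposeFin_symm_apply_succ e p 1

lemma per_G (r s t : ℝ) : per (G r s t) = (r^2+s^2+t^2)^2 := by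
  rw [per, ← Equiv.sum_comp (Equiv.Perm.decomposeFin).symm]
  simp only [Fintype.sum_prod_type, ← Equiv.sum_comp (Equiv.Perm.decomposeFin).symm]
  simp [Fintype.sum_prod_type, Fin.sum_univ_succ, Fin.prod_univ_succ,
    Equiv.swap_apply_def, d2_4, d3_4, d2_3, show (Fin.succ 2 : Fin 4) = 3 from rfl,
    show (Fin.succ 1 : Fin 3) = 2 from rfl, Fin.succ_ne_zero,
    Equiv.Perm.decomposeFin_symm_apply_zero, Equiv.Perm.decomposeFin_symm_apply_succ, G]
  ring

lemma F_eq (p : ℝ × ℝ × ℝ) :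
    F p = (p.1^4+p.2.1^4+p.2.2^4-2*p.1^2*p.2.1^2-2*p.1^2*p.2.2^2-2*p.2.1^2*p.2.2^2,
      p.1^2+p.2.1^2+p.2.2^2) := by
  rw [F, det_G, per_G, Real.sqrt_sq (by positivity)]

lemma injF : Set.InjOn F Δ₁ := by
  rintro ⟨r, s, t⟩ hp ⟨r', s', t'⟩ hq hF
  obtain ⟨h1, h2, h3, h4, h5, h6⟩ := hp
  obtain ⟨h1', h2', h3', h4', h5', h6'⟩ := hq
  rw [F_eq, F_eq, Prod.mk.injEq] at hF
  obtain ⟨hD, hQ⟩ := hF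
  simp only at h1 h2 h3 h4 h5 h6 h1' h2' h3' h4' h5' h6' hD hQ
  have he1 : r + s + t = r' + s' + t' := by linarith
  have he2 : r*s + r*t + s*t = r'*s' + r'*t' + s'*t' := by
    linear_combination ((r+s+t+1)/2) * h1 - ((r'+s'+t'+1)/2) * h1' - hQ/2
  have h8 : (2*r-1)*(2*s-1)*(2*t-1) = (2*r'-1)*(2*s'-1)*(2*t'-1) := by
    linear_combination hD +
      (-r^3 + r^2*s + r^2*t - r^2 + r*s^2 - 2*r*s*t + 2*r*s + r*t^2 + 2*r*t - r
        - s^3 + s^2*t - s^2 + s*t^2 + 2*s*t - s - t^3 - t^2 - t + 1) * h1 -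
      (-r'^3 + r'^2*s' + r'^2*t' - r'^2 + r'*s'^2 - 2*r'*s'*t' + 2*r'*s' + r'*t'^2
        + 2*r'*t' - r' - s'^3 + s'^2*t' - s'^2 + s'*t'^2 + 2*s'*t' - s' - t'^3
        - t'^2 - t' + 1) * h1'
  have he3 : r*s*t = r'*s'*t' := by
    linear_combination h8/8 + he2/2 - h1/4 + h1'/4
  have hcub1 : (r'-r)*(r'-s)*(r'-t) = 0 := by
    linear_combination (-(r'^2)) * he1 + r' * he2 - he3
  have hcub2 : (r-r')*(r-s')*(r-t') = 0 := by
    linear_combination (r^2) * he1 - r * he2 + he3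
  have hcub3 : (t'-r)*(t'-s)*(t'-t) = 0 := by
    linear_combination (-(t'^2)) * he1 + t' * he2 - he3
  have hcub4 : (t-r')*(t-s')*(t-t') = 0 := by
    linear_combination (t^2) * he1 - t * he2 + he3
  have hrr' : r = r' := by
    have hle1 : r ≤ r' := by
      rcases mul_eq_zero.1 hcub1 with h | h
      · rcases mul_eq_zero.1 h with h | h <;>
          · have := sub_eq_zero.1 h; linarith
      · have := sub_eq_zero.1 h; linarith
    have hle2 : r' ≤ r := by
      rcases mul_eq_zero.1 hcub2 with h | h
      · rcases mul_eq_zero.1 h with h | h <;>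
          · have := sub_eq_zero.1 h; linarith
      · have := sub_eq_zero.1 h; linarith
    linarith
  have htt' : t = t' := by
    have hle1 : t' ≤ t := by
      rcases mul_eq_zero.1 hcub3 with h | h
      · rcases mul_eq_zero.1 h with h | h <;>
          · have := sub_eq_zero.1 h; linarith
      · have := sub_eq_zero.1 h; linarith
    have hle2 : t ≤ t' := by
      rcases mul_eq_zero.1 hcub4 with h | h
      · rcases mul_eq_zero.1 h with h | h <;>
          · have := sub_eq_zero.1 h; linarith
      · have := sub_eq_zero.1 h; linarith
    linarith
  have hss' : s = s' := by linarith
  simp [hrr', hss', htt']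

lemma closedD : IsClosed Δ₁ := by
  have : Δ₁ = {p : ℝ × ℝ × ℝ | p.1 + p.2.1 + p.2.2 = 1} ∩
      ({p | p.1 ≤ p.2.1 + p.2.2} ∩ ({p | p.2.1 ≤ p.2.2 + p.1} ∩
      ({p | p.2.2 ≤ p.1 + p.2.1} ∩ ({p | p.1 ≤ p.2.1} ∩ {p | p.2.1 ≤ p.2.2})))) := by
    ext p; simp [Δ₁, Set.mem_setOf_eq]
  rw [this]
  refine (isClosed_eq (by fun_prop) (by fun_prop)).inter
    ((isClosed_le (by fun_prop) (by fun_prop)).inter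
    ((isClosed_le (by fun_prop) (by fun_prop)).inter
    ((isClosed_le (by fun_prop) (by fun_prop)).inter
    ((isClosed_le (by fun_prop) (by fun_prop)).inter
    (isClosed_le (by fun_prop) (by fun_prop))))))

lemma compactD : IsCompact Δ₁ := by
  refine IsCompact.of_isClosed_subset (isCompact_Icc (a := ((0:ℝ),(0:ℝ),(0:ℝ)))
    (b := ((1:ℝ),(1:ℝ),(1:ℝ)))) closedD ?_
  rintro ⟨r, s, t⟩ ⟨h1, h2, h3, h4, h5, h6⟩
  simp only at h1 h2 h3 h4 h5 h6
  constructor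
  · exact ⟨by dsimp; linarith, by dsimp; linarith, by dsimp; linarith⟩
  · exact ⟨by dsimp; linarith, by dsimp; linarith, by dsimp; linarith⟩

lemma contF : Continuous F := by
  have : F = fun p : ℝ × ℝ × ℝ =>
      ((p.1^4+p.2.1^4+p.2.2^4-2*p.1^2*p.2.1^2-2*p.1^2*p.2.2^2-2*p.2.1^2*p.2.2^2,
        p.1^2+p.2.1^2+p.2.2^2) : ℝ × ℝ) := funext F_eq
  rw [this]
  fun_prop

/-- The map `(r,s,t) ↦ (det, √per)` is injective on `Δ₁` and is a homeomorphism
from `Δ₁` onto its image `S`. -/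
theorem det_per_homeomorph :
    Set.InjOn F Δ₁ ∧
    ∃ e : Δ₁ ≃ₜ (F '' Δ₁), ∀ x : Δ₁, (e x : ℝ × ℝ) = F x := by
  refine ⟨injF, ?_⟩
  haveI : CompactSpace Δ₁ := isCompact_iff_compactSpace.1 compactD
  let φ : Δ₁ → (F '' Δ₁) := fun x => ⟨F x, ⟨x.1, x.2, rfl⟩⟩
  have hφc : Continuous φ := Continuous.subtype_mk (contF.comp continuous_subtype_val) _
  have hφbij : Function.Bijective φ := by
    constructor
    · intro a b hab
      exact Subtype.ext (injF a.2 b.2 (congrArg Subtype.val hab))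
    · rintro ⟨y, x, hx, rfl⟩
      exact ⟨⟨x, hx⟩, rfl⟩
  let E := Equiv.ofBijective φ hφbij
  exact ⟨Continuous.homeoOfEquivCompactToT2 (f := E) hφc, fun x => rfl⟩
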